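/- Fix β > 1, θ₀ ∈ ℝ^d, let m be the unique positive root of m = tanh(βm), let p = (1+m)/2, and let P_{θ₀} = p·N_d(θ₀,I_d) + (1−p)·N_d(−θ₀,I_d). Then E_{P_{θ₀}} tanh(βm + θ₀ᵀX) = m. -/

import Mathlib

/-! Put `a = β m`, so that `m = tanh a`, and `t = ⟪θ₀, x⟫`. Up to the common factor
`φ(x) e^{-‖θ₀‖²/2}` (φ the standard normal density), the mixture density is
`((1 + tanh a) e^t + (1 - tanh a) e^{-t}) / 2 = cosh (a + t) / cosh a`. Multiplying by
`tanh (a + t)` turns it into `sinh (a + t) / cosh a`, the same combination of `e^{±t}` with a minus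
sign. Hence `tanh (a + ⟪θ₀, x⟫)` times the mixture density is `p N(θ₀, I) - (1 - p) N(-θ₀, I)`,
whose integral is `p - (1 - p) = m`. -/

open MeasureTheory
open scoped RealInnerProductSpace ENNReal

/-- The multivariate Gaussian measure `N_d(μ, I_d)` on `ℝ^d`. -/
noncomputable def gaussian (d : ℕ) (μ : EuclideanSpace ℝ (Fin d)) :
    Measure (EuclideanSpace ℝ (Fin d)) :=
  volume.withDensity
    (fun x => ENNReal.ofReal ((2 * Real.pi) ^ (-(d : ℝ) / 2) * Real.exp (-‖x - μ‖ ^ 2 / 2)))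

/-- The asymmetric two-component Gaussian mixture
`P_{θ₀} = ((1+m)/2) N_d(θ₀, I_d) + ((1−m)/2) N_d(−θ₀, I_d)`. -/
noncomputable def asymMix (d : ℕ) (θ₀ : EuclideanSpace ℝ (Fin d)) (m : ℝ) :
    Measure (EuclideanSpace ℝ (Fin d)) :=
  ENNReal.ofReal ((1 + m) / 2) • gaussian d θ₀ + ENNReal.ofReal ((1 - m) / 2) • gaussian d (-θ₀)

open Real

lemma Real.tanh_add_mul_exp_add_exp_neg (a t : ℝ) :
    tanh (a + t) * ((1 + tanh a) * exp t + (1 - tanh a) * exp (-t))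
      = (1 + tanh a) * exp t - (1 - tanh a) * exp (-t) := by
  have hcosh : cosh a ≠ 0 := (cosh_pos a).ne'
  have hsum : (1 + tanh a) * exp t + (1 - tanh a) * exp (-t) = 2 * cosh (a + t) / cosh a := by
    rw [tanh_eq_sinh_div_cosh, cosh_add, ← cosh_add_sinh, ← cosh_sub_sinh]
    field_simp
    ring
  have hdiff : (1 + tanh a) * exp t - (1 - tanh a) * exp (-t) = 2 * sinh (a + t) / cosh a := by
    rw [tanh_eq_sinh_div_cosh, sinh_add, ← cosh_add_sinh, ← cosh_sub_sinh]
    field_simp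
    ring
  rw [hsum, hdiff, tanh_eq_sinh_div_cosh]
  field_simp [(cosh_pos (a + t)).ne']

theorem MeasureTheory.integral_withDensity_ofReal {α E : Type*} [MeasurableSpace α]
    [NormedAddCommGroup E] [NormedSpace ℝ E] {μ : Measure α} {f : α → ℝ} (hf : Measurable f)
    (hf_nonneg : 0 ≤ f) (g : α → E) :
    ∫ x, g x ∂μ.withDensity (fun x => ENNReal.ofReal (f x)) = ∫ x, f x • g x ∂μ := by
  rw [integral_withDensity_eq_integral_toReal_smul hf.ennreal_ofReal
    (ae_of_all _ fun _ => ENNReal.ofReal_lt_top)]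
  simp only [ENNReal.toReal_ofReal (hf_nonneg _)]

noncomputable def gaussianDensity (d : ℕ) (μ x : EuclideanSpace ℝ (Fin d)) : ℝ :=
  (2 * π) ^ (-(d : ℝ) / 2) * exp (-‖x - μ‖ ^ 2 / 2)

section GaussianDensity

variable {d : ℕ}

lemma gaussianDensity_nonneg (μ x : EuclideanSpace ℝ (Fin d)) : 0 ≤ gaussianDensity d μ x := by
  unfold gaussianDensity; positivity

@[fun_prop]
lemma measurable_gaussianDensity (μ : EuclideanSpace ℝ (Fin d)) :
    Measurable (gaussianDensity d μ) := by
  unfold gaussianDensity; fun_prop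

lemma gaussian_eq_withDensity_gaussianDensity (μ : EuclideanSpace ℝ (Fin d)) :
    gaussian d μ = volume.withDensity (fun x => ENNReal.ofReal (gaussianDensity d μ x)) := rfl

lemma integral_gaussianDensity (μ : EuclideanSpace ℝ (Fin d)) :
    ∫ x, gaussianDensity d μ x = 1 := by
  have hshift : ∫ x : EuclideanSpace ℝ (Fin d), exp (-‖x - μ‖ ^ 2 / 2)
      = ∫ x : EuclideanSpace ℝ (Fin d), exp (-(1 / 2) * ‖x‖ ^ 2) := by
    rw [integral_sub_right_eq_self (fun x => exp (-‖x‖ ^ 2 / 2)) μ]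
    ring_nf
  simp only [gaussianDensity]
  rw [integral_const_mul, hshift, GaussianFourier.integral_rexp_neg_mul_sq_norm (by norm_num),
    finrank_euclideanSpace_fin, div_div_eq_mul_div, div_one, mul_comm π, ← rpow_add (by positivity),
    neg_div, neg_add_cancel, rpow_zero]

lemma integrable_gaussianDensity (μ : EuclideanSpace ℝ (Fin d)) :
    Integrable (gaussianDensity d μ) :=
  .of_integral_ne_zero (by simp [integral_gaussianDensity])

lemma gaussianDensity_eq_exp_inner_mul (μ x : EuclideanSpace ℝ (Fin d)) :
    gaussianDensity d μ x = exp ⟪μ, x⟫ * (gaussianDensity d 0 x * exp (-‖μ‖ ^ 2 / 2)) := by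
  have hexp : -‖x - μ‖ ^ 2 / 2 = ⟪μ, x⟫ + (-‖x - 0‖ ^ 2 / 2 + -‖μ‖ ^ 2 / 2) := by
    rw [sub_zero, norm_sub_sq_real, real_inner_comm]
    ring
  simp only [gaussianDensity]
  rw [hexp, exp_add, exp_add]
  ring

end GaussianDensity

noncomputable def asymMixDensity (d : ℕ) (θ₀ : EuclideanSpace ℝ (Fin d)) (m : ℝ)
    (x : EuclideanSpace ℝ (Fin d)) : ℝ :=
  (1 + m) / 2 * gaussianDensity d θ₀ x + (1 - m) / 2 * gaussianDensity d (-θ₀) x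

section AsymMixDensity

variable {d : ℕ} (θ₀ : EuclideanSpace ℝ (Fin d))

lemma asymMixDensity_nonneg {m : ℝ} (hm₁ : -1 ≤ m) (hm₂ : m ≤ 1) : 0 ≤ asymMixDensity d θ₀ m :=
  fun x => add_nonneg (mul_nonneg (by linarith) (gaussianDensity_nonneg θ₀ x))
    (mul_nonneg (by linarith) (gaussianDensity_nonneg (-θ₀) x))

lemma asymMix_eq_withDensity {m : ℝ} (hm₁ : -1 ≤ m) (hm₂ : m ≤ 1) :
    asymMix d θ₀ m = volume.withDensity fun x => ENNReal.ofReal (asymMixDensity d θ₀ m x) := by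
  have hp : 0 ≤ (1 + m) / 2 := by linarith
  have hq : 0 ≤ (1 - m) / 2 := by linarith
  rw [asymMix, gaussian_eq_withDensity_gaussianDensity, gaussian_eq_withDensity_gaussianDensity,
    ← withDensity_smul' _ _ ENNReal.ofReal_ne_top, ← withDensity_smul' _ _ ENNReal.ofReal_ne_top,
    ← withDensity_add_left (by fun_prop)]
  congr 1
  funext x
  rw [asymMixDensity, ENNReal.ofReal_add (mul_nonneg hp (gaussianDensity_nonneg θ₀ x))
    (mul_nonneg hq (gaussianDensity_nonneg (-θ₀) x)), ENNReal.ofReal_mul hp, ENNReal.ofReal_mul hq]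
  rfl

lemma tanh_add_inner_mul_asymMixDensity_tanh (a : ℝ) (x : EuclideanSpace ℝ (Fin d)) :
    tanh (a + ⟪θ₀, x⟫) * asymMixDensity d θ₀ (tanh a) x
      = (1 + tanh a) / 2 * gaussianDensity d θ₀ x
        - (1 - tanh a) / 2 * gaussianDensity d (-θ₀) x := by
  rw [asymMixDensity, gaussianDensity_eq_exp_inner_mul θ₀, gaussianDensity_eq_exp_inner_mul (-θ₀),
    inner_neg_left, norm_neg]
  linear_combination (gaussianDensity d 0 x * exp (-‖θ₀‖ ^ 2 / 2) / 2)
    * tanh_add_mul_exp_add_exp_neg a ⟪θ₀, x⟫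

theorem integral_tanh_add_inner_asymMix_tanh (a : ℝ) :
    ∫ x, tanh (a + ⟪θ₀, x⟫) ∂asymMix d θ₀ (tanh a) = tanh a := by
  have h₁ := (neg_one_lt_tanh a).le
  have h₂ := (tanh_lt_one a).le
  rw [asymMix_eq_withDensity θ₀ h₁ h₂,
    integral_withDensity_ofReal (by unfold asymMixDensity; fun_prop)
      (asymMixDensity_nonneg θ₀ h₁ h₂)]
  simp only [smul_eq_mul, mul_comm _ (tanh _), tanh_add_inner_mul_asymMixDensity_tanh]
  rw [integral_sub ((integrable_gaussianDensity θ₀).const_mul _)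
      ((integrable_gaussianDensity (-θ₀)).const_mul _),
    integral_const_mul, integral_const_mul, integral_gaussianDensity, integral_gaussianDensity]
  ring

end AsymMixDensity

theorem asymMix_tanh_mean_general (d : ℕ) (β m : ℝ) (θ₀ : EuclideanSpace ℝ (Fin d))
    (hfix : m = Real.tanh (β * m)) :
    ∫ x, Real.tanh (β * m + ⟪θ₀, x⟫) ∂(asymMix d θ₀ m) = m := by
  have h := integral_tanh_add_inner_asymMix_tanh θ₀ (β * m)
  rwa [← hfix] at h

/-- with `β > 1`, `m` the unique positive root of `m = tanh(βm)` and
`P_{θ₀}` the weighted mixture with weights `(1±m)/2`, one has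
`E_{P_{θ₀}} tanh(βm + θ₀ᵀX) = m`. -/
theorem asymMix_tanh_mean (d : ℕ) (β m : ℝ) (θ₀ : EuclideanSpace ℝ (Fin d))
    (hβ : 1 < β) (hm : 0 < m) (hfix : m = Real.tanh (β * m)) :
    ∫ x, Real.tanh (β * m + ⟪θ₀, x⟫) ∂(asymMix d θ₀ m) = m :=
  asymMix_tanh_mean_general d β m θ₀ hfix
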